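/- Let (R, m) be a complete Noetherian local domain, I an m-primary ideal, T = R[It, t^{-1}] the extended Rees algebra, and n = mT + (It)T + t^{-1}T its homogeneous maximal ideal. Then for every integer c ≥ 0, the R-module homomorphism R → T_n sending 1 to t^{-c} is pure, i.e., it remains injective after tensoring with any R-module. -/

import Mathlib

/-!
If `x ⊗ t⁻ᶜ = y ⊗ t⁻ᶜ` in `M ⊗ T_𝔫 = (M ⊗ T)_𝔫`, then `x ⊗ s t⁻ᶜ = y ⊗ s t⁻ᶜ` in `M ⊗ T` for
some `s ∉ 𝔫`. The coefficient of `t⁻ᶜ` is an `R`-linear map `T → R`; applying it gives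
`s₀ x = s₀ y`. Now `𝔫` is exactly the set of elements whose constant term lies in `𝔪`, so `s₀` is
a unit and `x = y`. This description of `𝔫` holds because the constant term modulo `I` is a ring
homomorphism `T → R/I`: in `(pq)₀ = ∑ₐ pₐ q₋ₐ` every term with `a ≠ 0` has a factor of positive
degree, which lies in `I`.
-/

open LaurentPolynomial

/-- The extended Rees algebra `R[It, t⁻¹] = ⊕ₙ I^{max(n,0)} tⁿ ⊆ R[t, t⁻¹]`. -/
def extendedReesAlgebra (R : Type*) [CommRing R] (I : Ideal R) :
    Subalgebra R (LaurentPolynomial R) where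
  carrier := {p | ∀ n : ℤ, p.coeff n ∈ I ^ n.toNat}
  mul_mem' := by
    intro p q hp hq n
    classical
    rw [AddMonoidAlgebra.coeff_mul]
    simp only [Finsupp.sum]
    refine Submodule.sum_mem _ fun a _ => Submodule.sum_mem _ fun b _ => ?_
    split_ifs with h
    · subst h
      have h1 : p.coeff a * q.coeff b ∈ I ^ (a.toNat + b.toNat) := by
        rw [pow_add]; exact Ideal.mul_mem_mul (hp a) (hq b)
      exact Ideal.pow_le_pow_right (show (a + b).toNat ≤ a.toNat + b.toNat by omega) h1
    · exact (I ^ n.toNat).zero_mem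
  one_mem' := by
    intro n
    classical
    rw [AddMonoidAlgebra.one_def, AddMonoidAlgebra.coeff_single, Finsupp.single_apply]
    split_ifs with h
    · rw [← h, Int.toNat_zero, pow_zero, Ideal.one_eq_top]
      trivial
    · exact (I ^ n.toNat).zero_mem
  add_mem' := by
    intro p q hp hq n
    rw [AddMonoidAlgebra.coeff_add, Finsupp.add_apply]
    exact (I ^ n.toNat).add_mem (hp n) (hq n)
  zero_mem' := by intro n; rw [AddMonoidAlgebra.coeff_zero, Finsupp.coe_zero, Pi.zero_apply]; exact (I ^ n.toNat).zero_mem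
  algebraMap_mem' := by
    intro r n
    classical
    have hr : (algebraMap R (LaurentPolynomial R) r) = AddMonoidAlgebra.single (0 : ℤ) r := by
      first | rfl | simp [← single_eq_C] | simp [AddMonoidAlgebra.coe_algebraMap]
    rw [hr, AddMonoidAlgebra.coeff_single, Finsupp.single_apply]
    split_ifs with h
    · rw [← h, Int.toNat_zero, pow_zero, Ideal.one_eq_top]
      trivial
    · exact (I ^ n.toNat).zero_mem

lemma T_mem_extendedReesAlgebra {R : Type*} [CommRing R] (I : Ideal R) (n : ℤ) (hn : n ≤ 0) :
    (T n : LaurentPolynomial R) ∈ extendedReesAlgebra R I := by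
  intro m
  classical
  unfold LaurentPolynomial.T
  rw [AddMonoidAlgebra.coeff_single, Finsupp.single_apply]
  split_ifs with h
  · rw [show m.toNat = 0 by omega, pow_zero, Ideal.one_eq_top]
    trivial
  · exact (I ^ m.toNat).zero_mem


set_option synthInstance.maxHeartbeats 1000000
set_option maxHeartbeats 1000000

/-- The homogeneous maximal ideal `𝔫 = 𝔪T + (It)T + t⁻¹T` of the extended Rees algebra. -/
noncomputable def extReesMaxIdeal (R : Type*) [CommRing R] [IsLocalRing R] (I : Ideal R) :
    Ideal (extendedReesAlgebra R I) :=
  Ideal.span ((algebraMap R (extendedReesAlgebra R I)) ''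
      ((IsLocalRing.maximalIdeal R : Ideal R) : Set R)) +
    Ideal.span {p : extendedReesAlgebra R I |
      ∃ x ∈ I, (p : LaurentPolynomial R) = AddMonoidAlgebra.single (1 : ℤ) x} +
    Ideal.span {(⟨T (-1), T_mem_extendedReesAlgebra I (-1) (by norm_num)⟩ :
      extendedReesAlgebra R I)}

open TensorProduct in
theorem IsLocalization.algebraMap_tmul_injective {R A L : Type*} [CommSemiring R]
    [CommSemiring A] [Algebra R A] (S : Submonoid A) [CommSemiring L] [Algebra A L]
    [IsLocalization S L] [Algebra R L] [IsScalarTower R A L] (φ : A →ₗ[R] R) (a : A)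
    (hφ : ∀ s ∈ S, IsUnit (φ (s * a))) (M : Type*) [AddCommMonoid M] [Module R M] :
    Function.Injective fun m : M => algebraMap A L a ⊗ₜ[R] m := by
  intro x y hxy
  have hloc : AlgebraTensorModule.rTensor R M (Algebra.linearMap A L) (a ⊗ₜ x) =
      AlgebraTensorModule.rTensor R M (Algebra.linearMap A L) (a ⊗ₜ y) := hxy
  obtain ⟨s, hs⟩ := IsLocalizedModule.exists_of_eq (S := S) hloc
  have hsa : (s * a : A) ⊗ₜ[R] x = (s * a : A) ⊗ₜ[R] y := by
    simpa only [Submonoid.smul_def, smul_tmul', smul_eq_mul] using hs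
  have := congrArg (TensorProduct.lid R M ∘ LinearMap.rTensor M φ) hsa
  simp only [Function.comp_apply, LinearMap.rTensor_tmul, TensorProduct.lid_tmul] at this
  exact (hφ s s.2).smul_left_cancel.mp this

theorem IsLocalization.lTensor_toSpanSingleton_algebraMap_injective {R A L : Type*}
    [CommSemiring R] [CommSemiring A] [Algebra R A] (S : Submonoid A) [CommSemiring L]
    [Algebra A L] [IsLocalization S L] [Algebra R L] [IsScalarTower R A L] (φ : A →ₗ[R] R)
    (a : A) (hφ : ∀ s ∈ S, IsUnit (φ (s * a))) (M : Type*) [AddCommMonoid M] [Module R M] :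
    Function.Injective
      (LinearMap.lTensor M (LinearMap.toSpanSingleton R L (algebraMap A L a))) := by
  have : LinearMap.lTensor M (LinearMap.toSpanSingleton R L (algebraMap A L a)) =
      (TensorProduct.comm R L M).toLinearMap ∘ₗ TensorProduct.mk R L M (algebraMap A L a) ∘ₗ
        (TensorProduct.rid R M).toLinearMap := by
    ext m
    simp
  rw [this, LinearMap.coe_comp, LinearMap.coe_comp, LinearEquiv.coe_coe, LinearEquiv.coe_coe]
  exact (TensorProduct.comm R L M).injective.comp
    ((algebraMap_tmul_injective S φ a hφ M).comp (TensorProduct.rid R M).injective)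

noncomputable section

namespace extendedReesAlgebra

open IsLocalRing

variable {R : Type*} [CommRing R] (I : Ideal R)

lemma coeff_mem (p : extendedReesAlgebra R I) (n : ℤ) :
    (p : R[T;T⁻¹]).coeff n ∈ I ^ n.toNat :=
  p.2 n

lemma coeff_mem_of_pos (p : extendedReesAlgebra R I) {n : ℤ} (hn : 0 < n) :
    (p : R[T;T⁻¹]).coeff n ∈ I :=
  Ideal.pow_le_self (by omega) (coeff_mem I p n)

def single (n : ℤ) (r : R) (hr : r ∈ I ^ n.toNat) : extendedReesAlgebra R I :=
  ⟨.single n r, fun m => by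
    classical
    rw [AddMonoidAlgebra.coeff_single, Finsupp.single_apply]
    split_ifs with h
    · exact h ▸ hr
    · exact zero_mem _⟩

@[simp] lemma coe_single (n : ℤ) (r : R) (hr : r ∈ I ^ n.toNat) :
    (single I n r hr : R[T;T⁻¹]) = .single n r :=
  rfl

lemma single_zero (r : R) (hr : r ∈ I ^ (0 : ℤ).toNat) :
    single I 0 r hr = algebraMap R (extendedReesAlgebra R I) r :=
  rfl

lemma eq_sum_single (p : extendedReesAlgebra R I) :
    p = ∑ n ∈ (p : R[T;T⁻¹]).coeff.support, single I n _ (coeff_mem I p n) :=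
  Subtype.ext <| by
    simpa only [AddSubmonoidClass.coe_finsetSum, coe_single, Finsupp.sum] using
      (AddMonoidAlgebra.sum_coeff_single (p : R[T;T⁻¹])).symm

def lcoeff (n : ℤ) : extendedReesAlgebra R I →ₗ[R] R :=
  Finsupp.lapply n ∘ₗ (AddMonoidAlgebra.coeffLinearEquiv R).toLinearMap ∘ₗ
    (extendedReesAlgebra R I).val.toLinearMap

@[simp] lemma lcoeff_apply (n : ℤ) (p : extendedReesAlgebra R I) :
    lcoeff I n p = (p : R[T;T⁻¹]).coeff n :=
  rfl

lemma lcoeff_mul_T (p : extendedReesAlgebra R I) {n : ℤ} (hn : n ≤ 0) (m : ℤ) :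
    lcoeff I m (p * ⟨T n, T_mem_extendedReesAlgebra I n hn⟩) = lcoeff I (m - n) p := by
  change ((p : R[T;T⁻¹]) * .single n 1).coeff m = _
  rw [AddMonoidAlgebra.coeff_mul_single_apply, mul_one, sub_eq_add_neg, lcoeff_apply]

lemma coeff_mul_coeff_neg_mem (p q : extendedReesAlgebra R I) {n : ℤ} (hn : n ≠ 0) :
    (p : R[T;T⁻¹]).coeff n * (q : R[T;T⁻¹]).coeff (-n) ∈ I := by
  rcases hn.lt_or_gt with hn | hn
  · exact I.mul_mem_left _ (coeff_mem_of_pos I q (by omega))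
  · exact I.mul_mem_right _ (coeff_mem_of_pos I p hn)

def constantCoeff : extendedReesAlgebra R I →+* R ⧸ I where
  toFun p := Ideal.Quotient.mk I ((p : R[T;T⁻¹]).coeff 0)
  map_one' := by
    rw [OneMemClass.coe_one, ← single_zero_one_eq_one, AddMonoidAlgebra.coeff_single,
      Finsupp.single_eq_same, map_one]
  map_mul' p q := by
    rw [← map_mul, MulMemClass.coe_mul, AddMonoidAlgebra.coeff_mul_apply_left, Finsupp.sum,
      map_sum]
    refine (Finset.sum_eq_single 0 (fun n _ hn => ?_) fun h0 => ?_).trans (by simp)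
    · exact Ideal.Quotient.eq_zero_iff_mem.mpr (by simpa using coeff_mul_coeff_neg_mem I p q hn)
    · simp [Finsupp.notMem_support_iff.mp h0]
  map_zero' := by simp
  map_add' p q := by simp

lemma constantCoeff_apply (p : extendedReesAlgebra R I) :
    constantCoeff I p = Ideal.Quotient.mk I ((p : R[T;T⁻¹]).coeff 0) :=
  rfl

lemma mem_ker_factor_comp_constantCoeff {J : Ideal R} (hIJ : I ≤ J)
    (p : extendedReesAlgebra R I) :
    p ∈ RingHom.ker ((Ideal.Quotient.factor hIJ).comp (constantCoeff I)) ↔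
      (p : R[T;T⁻¹]).coeff 0 ∈ J := by
  rw [RingHom.mem_ker, RingHom.comp_apply, constantCoeff_apply, Ideal.Quotient.factor_mk,
    Ideal.Quotient.eq_zero_iff_mem]

section IsLocalRing

variable [IsLocalRing R]

lemma algebraMap_mem_extReesMaxIdeal {r : R} (hr : r ∈ maximalIdeal R) :
    algebraMap R (extendedReesAlgebra R I) r ∈ extReesMaxIdeal R I :=
  Ideal.mem_sup_left (Ideal.mem_sup_left (Ideal.subset_span ⟨r, hr, rfl⟩))

lemma single_one_mem_extReesMaxIdeal {x : R} (hx : x ∈ I ^ (1 : ℤ).toNat) :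
    single I 1 x hx ∈ extReesMaxIdeal R I :=
  Ideal.mem_sup_left (Ideal.mem_sup_right (Ideal.subset_span ⟨x, by simpa using hx, rfl⟩))

lemma T_neg_one_mem_extReesMaxIdeal :
    ⟨T (-1), T_mem_extendedReesAlgebra I (-1) (by norm_num)⟩ ∈ extReesMaxIdeal R I :=
  Ideal.mem_sup_right (Ideal.mem_span_singleton_self _)

lemma single_mem_extReesMaxIdeal_of_neg {n : ℤ} (hn : n < 0) (r : R) (hr : r ∈ I ^ n.toNat) :
    single I n r hr ∈ extReesMaxIdeal R I := by
  have hr' : r ∈ I ^ (1 + n).toNat := by simp [show (1 + n).toNat = 0 by omega]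
  have : single I n r hr =
      ⟨T (-1), T_mem_extendedReesAlgebra I (-1) (by norm_num)⟩ * single I (1 + n) r hr' :=
    Subtype.ext <| by
      change AddMonoidAlgebra.single n r = .single (-1) 1 * .single (1 + n) r
      rw [AddMonoidAlgebra.single_mul_single, one_mul, neg_add_cancel_left]
  rw [this]
  exact Ideal.mul_mem_right _ _ (T_neg_one_mem_extReesMaxIdeal I)

lemma single_mem_extReesMaxIdeal_of_pos {n : ℤ} (hn : 0 < n) (r : R) (hr : r ∈ I ^ n.toNat) :
    single I n r hr ∈ extReesMaxIdeal R I := by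
  obtain ⟨k, hk⟩ : ∃ k : ℕ, n.toNat = k + 1 := ⟨n.toNat - 1, by omega⟩
  have hpred : (n - 1).toNat = k := by omega
  have hmul : r ∈ I * I ^ k := by rwa [← pow_succ', ← hk]
  revert hr
  induction hmul using Submodule.mul_induction_on' with
  | mem_mul_mem x hx y hy =>
    intro hxy
    have : single I n (x * y) hxy =
        single I 1 x (by simpa using hx) * single I (n - 1) y (by rwa [hpred]) :=
      Subtype.ext <| by
        change AddMonoidAlgebra.single n (x * y) = .single 1 x * .single (n - 1) y
        rw [AddMonoidAlgebra.single_mul_single, add_sub_cancel]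
    rw [this]
    exact Ideal.mul_mem_right _ _ (single_one_mem_extReesMaxIdeal I _)
  | add x hx y hy ihx ihy =>
    intro hxy
    have hx' : x ∈ I ^ n.toNat := by rwa [hk, pow_succ']
    have hy' : y ∈ I ^ n.toNat := by rwa [hk, pow_succ']
    have : single I n (x + y) hxy = single I n x hx' + single I n y hy' :=
      Subtype.ext (AddMonoidAlgebra.single_add n x y)
    rw [this]
    exact add_mem (ihx hx') (ihy hy')

lemma single_mem_extReesMaxIdeal {n : ℤ} (hn : n ≠ 0) (r : R) (hr : r ∈ I ^ n.toNat) :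
    single I n r hr ∈ extReesMaxIdeal R I := by
  rcases hn.lt_or_gt with hn | hn
  · exact single_mem_extReesMaxIdeal_of_neg I hn r hr
  · exact single_mem_extReesMaxIdeal_of_pos I hn r hr

lemma mem_extReesMaxIdeal_of_coeff_zero_mem (p : extendedReesAlgebra R I)
    (hp : (p : R[T;T⁻¹]).coeff 0 ∈ maximalIdeal R) : p ∈ extReesMaxIdeal R I := by
  rw [eq_sum_single I p]
  refine sum_mem fun n _ => ?_
  rcases eq_or_ne n 0 with rfl | hn
  · exact single_zero I _ _ ▸ algebraMap_mem_extReesMaxIdeal I hp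
  · exact single_mem_extReesMaxIdeal I hn _ _

lemma isUnit_lcoeff_zero_of_notMem {s : extendedReesAlgebra R I}
    (hs : s ∉ extReesMaxIdeal R I) : IsUnit (lcoeff I 0 s) :=
  notMem_maximalIdeal.mp fun h => hs (mem_extReesMaxIdeal_of_coeff_zero_mem I s h)

theorem extReesMaxIdeal_eq_ker (hI : I ≤ maximalIdeal R) :
    extReesMaxIdeal R I = RingHom.ker ((Ideal.Quotient.factor hI).comp (constantCoeff I)) := by
  refine le_antisymm ?_ fun p hp => mem_extReesMaxIdeal_of_coeff_zero_mem I p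
    ((mem_ker_factor_comp_constantCoeff I hI p).mp hp)
  refine sup_le (sup_le ?_ ?_) ?_ <;> rw [Ideal.span_le]
  · rintro _ ⟨r, hr, rfl⟩
    rwa [SetLike.mem_coe, mem_ker_factor_comp_constantCoeff, ← single_zero I r (by simp),
      coe_single, AddMonoidAlgebra.coeff_single, Finsupp.single_eq_same]
  · rintro p ⟨x, -, hx⟩
    rw [SetLike.mem_coe, mem_ker_factor_comp_constantCoeff, hx, AddMonoidAlgebra.coeff_single,
      Finsupp.single_eq_of_ne (by norm_num)]
    exact zero_mem _
  · rw [Set.singleton_subset_iff, SetLike.mem_coe, mem_ker_factor_comp_constantCoeff]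
    change (AddMonoidAlgebra.single (-1 : ℤ) (1 : R)).coeff 0 ∈ _
    rw [AddMonoidAlgebra.coeff_single, Finsupp.single_eq_of_ne (by norm_num)]
    exact zero_mem _

theorem isPrime_extReesMaxIdeal (hI : I ≤ maximalIdeal R) : (extReesMaxIdeal R I).IsPrime := by
  rw [extReesMaxIdeal_eq_ker I hI]
  exact RingHom.ker_isPrime _

end IsLocalRing

end extendedReesAlgebra

end

/-- Let `(R,𝔪)` be a complete Noetherian local domain, `I` an `𝔪`-primary ideal,
`T = R[It,t⁻¹]` the extended Rees algebra and `𝔫` its homogeneous maximal ideal.  Then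
(`𝔫` is prime and) for every `c ≥ 0` the `R`-module map `R → T_𝔫` sending `1` to `t⁻ᶜ`
is pure: it stays injective after tensoring with an arbitrary `R`-module `M`. -/
theorem extendedReesAlgebra_localization_pure
    {R : Type u} [CommRing R] [IsLocalRing R]
    (I : Ideal R) (hI : I.radical = IsLocalRing.maximalIdeal R) :
    ∃ hp : (extReesMaxIdeal R I).IsPrime,
      ∀ (c : ℕ) (M : Type u) [AddCommGroup M] [Module R M],
        let Tn := Localization (@Ideal.primeCompl _ _ (extReesMaxIdeal R I) hp)
        let _i : Algebra R Tn :=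
          ((algebraMap (extendedReesAlgebra R I) Tn).comp
            (algebraMap R (extendedReesAlgebra R I))).toAlgebra
        Function.Injective
          (LinearMap.lTensor M
            (LinearMap.toSpanSingleton R Tn
              (algebraMap (extendedReesAlgebra R I) Tn
                ⟨T (-(c : ℤ)), T_mem_extendedReesAlgebra I (-(c : ℤ)) (by omega)⟩))) := by
  have hIm : I ≤ IsLocalRing.maximalIdeal R := hI ▸ Ideal.le_radical
  have hp := extendedReesAlgebra.isPrime_extReesMaxIdeal I hIm
  refine ⟨hp, ?_⟩
  intro c M _ _ Tn _i
  -- the goal uses the global `R`-module structure on `Tn`; `_i` would take precedence in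
  -- instance search
  clear _i
  refine IsLocalization.lTensor_toSpanSingleton_algebraMap_injective
    (extReesMaxIdeal R I).primeCompl (extendedReesAlgebra.lcoeff I (-c)) _ (fun s hs => ?_) M
  rw [extendedReesAlgebra.lcoeff_mul_T I s (by omega), sub_self]
  exact extendedReesAlgebra.isUnit_lcoeff_zero_of_notMem I hs
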